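/- arXiv:2605.05330 — 5 statements merged into one kernel-verified Lean document; each statement's English description precedes it below -/
import Mathlib

section
/- A binary vector x ∈ {0,1}^n is a fixed point of the graph normalization map GN (with GN(x)_i = x_i / ((A+I)x)_i, defined on normalizable x) if and only if its support is a maximal independent set of the graph with adjacency matrix A. -/
open Matrix BigOperators

theorem binary_fixed_point_iff_maximal_independent_set (n : ℕ)
    (A : Matrix (Fin n) (Fin n) ℝ)
    (hsym : A.IsSymm) (hdiag : ∀ i, A i i = 0)
    (hbin : ∀ i j, A i j = 0 ∨ A i j = 1)
    (x : Fin n → ℝ) (hxbin : ∀ i, x i = 0 ∨ x i = 1)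
    (hnorm : ∀ i, 0 < ((A + 1) *ᵥ x) i) :
    (∀ i, x i / ((A + 1) *ᵥ x) i = x i) ↔
      ((∀ i ∈ {i | x i = 1}, ∀ j ∈ {i | x i = 1}, A i j = 0) ∧
        ∀ T : Set (Fin n), {i | x i = 1} ⊆ T →
          (∀ i ∈ T, ∀ j ∈ T, A i j = 0) → T = {i | x i = 1}) := by
  have hs : ∀ i, ((A + 1) *ᵥ x) i = (∑ j, A i j * x j) + x i := by
    intro i
    simp [Matrix.mulVec, dotProduct, Matrix.one_apply, add_mul, Finset.sum_add_distrib,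
      ite_mul, Finset.sum_ite_eq]
  have hnn : ∀ i j, 0 ≤ A i j * x j := by
    intro i j
    rcases hbin i j with h | h <;> rcases hxbin j with h' | h' <;> simp [h, h']
  constructor
  · intro hfix
    have hind : ∀ i ∈ {i | x i = 1}, ∀ j ∈ {i | x i = 1}, A i j = 0 := by
      intro i hi j hj
      simp only [Set.mem_setOf_eq] at hi hj
      have hf := hfix i
      rw [hi] at hf
      have hne : ((A + 1) *ᵥ x) i ≠ 0 := ne_of_gt (hnorm i)
      have h1 : ((A + 1) *ᵥ x) i = 1 := by
        field_simp at hf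
        linarith [hf]
      rw [hs i, hi] at h1
      have hsum : (∑ j, A i j * x j) = 0 := by linarith
      have := (Finset.sum_eq_zero_iff_of_nonneg (fun j _ => hnn i j)).mp hsum j
        (Finset.mem_univ j)
      rw [hj, mul_one] at this
      exact this
    refine ⟨hind, ?_⟩
    intro T hsub hTind
    apply Set.Subset.antisymm _ hsub
    intro t ht
    by_contra hts
    simp only [Set.mem_setOf_eq] at hts
    have hxt : x t = 0 := (hxbin t).resolve_right hts
    have hpos := hnorm t
    rw [hs t, hxt, add_zero] at hpos
    obtain ⟨j, _, hj⟩ := Finset.exists_lt_of_sum_lt (f := fun _ : Fin n => (0:ℝ))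
      (by simpa using hpos)
    have hj' : 0 < A t j * x j := hj
    have hxj : x j = 1 := by
      rcases hxbin j with h | h
      · rw [h, mul_zero] at hj'; exact absurd hj' (lt_irrefl 0)
      · exact h
    have : A t j = 0 := hTind t ht j (hsub hxj)
    rw [this, zero_mul] at hj'
    exact absurd hj' (lt_irrefl 0)
  · rintro ⟨hind, -⟩ i
    rcases hxbin i with h | h
    · simp [h]
    · have hsum : (∑ j, A i j * x j) = 0 := by
        apply Finset.sum_eq_zero
        intro j _
        rcases hxbin j with h' | h'
        · simp [h']
        · rw [hind i h j h', zero_mul]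
      rw [hs i, hsum, zero_add, h, div_one]
end

section
/- Let S be a symmetric n×n real matrix with S_{ii} = 1 and S_{ij} ≥ 0, let v ∈ ℝ^n with v > 0. Suppose y ∈ ℝ^n is obtained from some z > 0 with (Sz)_i > 0 by the update y_i = v_i z_i / (Sz)_i. Then y^T S y ≤ Σ_i v_i y_i, with equality if and only if (Sy)_i = v_i for all i in the support of y. -/
open Matrix BigOperators

theorem wrgn_quadratic_bound (n : ℕ) (S : Matrix (Fin n) (Fin n) ℝ)
    (hsym : S.IsSymm) (hdiag : ∀ i, S i i = 1)
    (hnonneg : ∀ i j, 0 ≤ S i j)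
    (v z : Fin n → ℝ) (hv : ∀ i, 0 < v i) (hz : ∀ i, 0 < z i)
    (hSz : ∀ i, 0 < (S *ᵥ z) i)
    (y : Fin n → ℝ) (hy : ∀ i, y i = v i * z i / (S *ᵥ z) i) :
    y ⬝ᵥ (S *ᵥ y) ≤ ∑ i, v i * y i ∧
      (y ⬝ᵥ (S *ᵥ y) = ∑ i, v i * y i ↔ ∀ i, y i ≠ 0 → (S *ᵥ y) i = v i) := by
  have hzne : ∀ i, z i ≠ 0 := fun i => (hz i).ne'
  have hypos : ∀ i, 0 < y i := fun i => by
    rw [hy i]; exact div_pos (mul_pos (hv i) (hz i)) (hSz i)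
  have hvy : ∀ i, v i = y i * (S *ᵥ z) i / z i := fun i => by
    rw [hy i]; field_simp [hzne i, (hSz i).ne']
  -- expand the quadratic form
  have hA : y ⬝ᵥ (S *ᵥ y) = ∑ i, ∑ j, S i j * y i * y j := by
    simp only [dotProduct, mulVec, Finset.mul_sum]
    exact Finset.sum_congr rfl fun i _ => Finset.sum_congr rfl fun j _ => by ring
  have hD : (∑ i, v i * y i) = ∑ i, ∑ j, S i j * y i ^ 2 * z j / z i := by
    refine Finset.sum_congr rfl fun i _ => ?_
    rw [hvy i]
    simp only [mulVec, dotProduct]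
    rw [div_mul_eq_mul_div, Finset.mul_sum, Finset.sum_mul, Finset.sum_div]
    refine Finset.sum_congr rfl fun j _ => ?_
    field_simp [hzne i]
  have hswap : (∑ i, ∑ j, S i j * y j ^ 2 * z i / z j)
      = ∑ i, ∑ j, S i j * y i ^ 2 * z j / z i := by
    rw [Finset.sum_comm]
    refine Finset.sum_congr rfl fun i _ => Finset.sum_congr rfl fun j _ => ?_
    rw [hsym.apply i j]
  have hterm : ∀ i j, S i j * (y i * z j - y j * z i) ^ 2 / (2 * z i * z j)
      = (S i j * y i ^ 2 * z j / z i) / 2 + (S i j * y j ^ 2 * z i / z j) / 2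
        - S i j * y i * y j := by
    intro i j
    field_simp [hzne i, hzne j]
    ring
  have hkey : (∑ i, v i * y i) - y ⬝ᵥ (S *ᵥ y)
      = ∑ i, ∑ j, S i j * (y i * z j - y j * z i) ^ 2 / (2 * z i * z j) := by
    have : (∑ i, ∑ j, S i j * (y i * z j - y j * z i) ^ 2 / (2 * z i * z j))
        = (∑ i, ∑ j, S i j * y i ^ 2 * z j / z i) / 2
          + (∑ i, ∑ j, S i j * y j ^ 2 * z i / z j) / 2
          - ∑ i, ∑ j, S i j * y i * y j := by
      simp only [hterm, Finset.sum_add_distrib, Finset.sum_sub_distrib, ← Finset.sum_div]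
    rw [this, hswap, hA, hD]
    ring
  have htnn : ∀ i ∈ Finset.univ, ∀ j ∈ (Finset.univ : Finset (Fin n)),
      0 ≤ S i j * (y i * z j - y j * z i) ^ 2 / (2 * z i * z j) := by
    intro i _ j _
    have h1 := hz i; have h2 := hz j
    apply div_nonneg (mul_nonneg (hnonneg i j) (sq_nonneg _))
    positivity
  have hTnn : 0 ≤ ∑ i, ∑ j, S i j * (y i * z j - y j * z i) ^ 2 / (2 * z i * z j) :=
    Finset.sum_nonneg fun i hi => Finset.sum_nonneg (htnn i hi)
  constructor
  · linarith [hkey, hTnn]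
  constructor
  · intro heq
    -- the sum of nonnegative terms is zero, so each term is zero
    have hT0 : (∑ i, ∑ j, S i j * (y i * z j - y j * z i) ^ 2 / (2 * z i * z j)) = 0 := by
      linarith [hkey]
    have hall : ∀ i j, S i j * (y i * z j - y j * z i) ^ 2 / (2 * z i * z j) = 0 := by
      intro i j
      have h1 := (Finset.sum_eq_zero_iff_of_nonneg
        (fun i hi => Finset.sum_nonneg (htnn i hi))).mp hT0 i (Finset.mem_univ i)
      exact (Finset.sum_eq_zero_iff_of_nonneg (htnn i (Finset.mem_univ i))).mp h1 j
        (Finset.mem_univ j)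
    intro i _
    rw [hvy i]
    simp only [mulVec, dotProduct]
    rw [Finset.mul_sum, Finset.sum_div]
    refine Finset.sum_congr rfl fun j _ => ?_
    rcases eq_or_ne (S i j) 0 with hS0 | hS0
    · rw [hS0]; ring
    · have h2 : (y i * z j - y j * z i) ^ 2 = 0 := by
        have h := hall i j
        have hden : (2 * z i * z j) ≠ 0 := by
          have := hz i; have := hz j; positivity
        rcases div_eq_zero_iff.mp h with h' | h'
        · exact (mul_eq_zero.mp h').resolve_left hS0
        · exact absurd h' hden
      have h3 : y i * z j = y j * z i := by
        have := sq_eq_zero_iff.mp h2; linarith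
      rw [eq_div_iff (hzne i)]
      linear_combination (-(S i j)) * h3
  · intro hfix
    rw [hA]
    refine Finset.sum_congr rfl fun i _ => ?_
    have := hfix i (hypos i).ne'
    calc ∑ j, S i j * y i * y j = y i * (S *ᵥ y) i := by
          simp only [mulVec, dotProduct, Finset.mul_sum]
          exact Finset.sum_congr rfl fun j _ => by ring
      _ = v i * y i := by rw [this]; ring
end

section
/- Let S be a symmetric n×n real matrix with unit diagonal and nonnegative entries, v > 0, and let y^{k+1}_i = y^k_i v_i / (Sy^k)_i be the weighted graph normalization update applied to a strictly positive y^k that is itself the image of a prior update step. Then the weighted mass M_v(y) = Σ_i v_i y_i is non-decreasing: M_v(y^{k+1}) ≥ M_v(y^k), with strict inequality unless y^k is a fixed point. -/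
open Matrix BigOperators

theorem wrgn_mass_increase (n : ℕ) (S : Matrix (Fin n) (Fin n) ℝ)
    (hsym : S.IsSymm) (hdiag : ∀ i, S i i = 1)
    (hnonneg : ∀ i j, 0 ≤ S i j)
    (v y : Fin n → ℝ) (hv : ∀ i, 0 < v i) (hy : ∀ i, 0 < y i)
    (hSy : ∀ i, 0 < (S *ᵥ y) i)
    (himg : y ⬝ᵥ (S *ᵥ y) ≤ ∑ i, v i * y i)
    (y' : Fin n → ℝ) (hy' : ∀ i, y' i = v i * y i / (S *ᵥ y) i) :
    (∑ i, v i * y i) ≤ ∑ i, v i * y' i ∧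
      ((∃ i, (S *ᵥ y) i ≠ v i) → (∑ i, v i * y i) < ∑ i, v i * y' i) := by
  have key : ∀ i, v i * y' i - y i * (2 * v i - (S *ᵥ y) i)
      = y i * (v i - (S *ᵥ y) i) ^ 2 / (S *ᵥ y) i := by
    intro i
    rw [hy' i]
    have h := (hSy i).ne'
    field_simp
    ring
  have hge : ∀ i, y i * (2 * v i - (S *ᵥ y) i) ≤ v i * y' i := by
    intro i
    have hpos : 0 ≤ y i * (v i - (S *ᵥ y) i) ^ 2 / (S *ᵥ y) i :=
      div_nonneg (mul_nonneg (hy i).le (sq_nonneg _)) (hSy i).le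
    linarith [key i]
  have hsum : ∑ i, y i * (2 * v i - (S *ᵥ y) i)
      = 2 * (∑ i, v i * y i) - y ⬝ᵥ (S *ᵥ y) := by
    simp only [dotProduct, mul_sub, Finset.sum_sub_distrib, Finset.mul_sum]
    congr 1
    apply Finset.sum_congr rfl
    intro i _
    ring
  have hsumge : ∑ i, y i * (2 * v i - (S *ᵥ y) i) ≤ ∑ i, v i * y' i :=
    Finset.sum_le_sum fun i _ => hge i
  constructor
  · linarith
  · rintro ⟨i, hi⟩
    have hstrict : y i * (2 * v i - (S *ᵥ y) i) < v i * y' i := by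
      have hpos : 0 < y i * (v i - (S *ᵥ y) i) ^ 2 / (S *ᵥ y) i := by
        apply div_pos _ (hSy i)
        have hne : v i - (S *ᵥ y) i ≠ 0 := sub_ne_zero.mpr (Ne.symm hi)
        exact mul_pos (hy i) (lt_of_le_of_ne (sq_nonneg _) (Ne.symm (pow_ne_zero 2 hne)))
      linarith [key i]
    have hlt : ∑ j, y j * (2 * v j - (S *ᵥ y) j) < ∑ j, v j * y' j :=
      Finset.sum_lt_sum (fun j _ => hge j) ⟨i, Finset.mem_univ i, hstrict⟩
    linarith
end

section
/- Let S be a symmetric nonnegative matrix and y^k > 0. For the update y^{k+1}_i = v_i y^k_i / (Sy^k)_i with v > 0 and Sy^k > 0, Jensen's inequality for the convex function t ↦ 1/t gives: Σ_i v_i y^{k+1}_i ≥ (Σ_i v_i y^k_i)^2 / ((y^k)^T S y^k). -/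
/-!
Since `v i * y' i = (v i * y i) ^ 2 / (y i * (S *ᵥ y) i)` and the denominators sum to
`y ⬝ᵥ S *ᵥ y`, the bound is Sedrakyan's form `(∑ a) ^ 2 / ∑ b ≤ ∑ a ^ 2 / b` of the
Cauchy–Schwarz inequality, i.e. Jensen's inequality for `t ↦ 1 / t` with weights `y i * (S *ᵥ y) i`.
-/

open Matrix BigOperators

theorem sq_sum_mul_div_dotProduct_mulVec_le {ι R : Type*} [Fintype ι] [Field R] [LinearOrder R]
    [IsStrictOrderedRing R] (M : Matrix ι ι R) (v y : ι → R) (hy : ∀ i, 0 < y i)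
    (hMy : ∀ i, 0 < (M *ᵥ y) i) :
    (∑ i, v i * y i) ^ 2 / (y ⬝ᵥ (M *ᵥ y)) ≤ ∑ i, v i * (v i * y i / (M *ᵥ y) i) :=
  calc (∑ i, v i * y i) ^ 2 / (y ⬝ᵥ (M *ᵥ y))
      = (∑ i, v i * y i) ^ 2 / ∑ i, y i * (M *ᵥ y) i := rfl
    _ ≤ ∑ i, (v i * y i) ^ 2 / (y i * (M *ᵥ y) i) :=
      Finset.sq_sum_div_le_sum_sq_div _ _ fun i _ ↦ mul_pos (hy i) (hMy i)
    _ = ∑ i, v i * (v i * y i / (M *ᵥ y) i) := Finset.sum_congr rfl fun i _ ↦ by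
      have := (hy i).ne'
      field_simp

theorem wrgn_jensen_mass_bound_general (n : ℕ) (S : Matrix (Fin n) (Fin n) ℝ)
    (v y : Fin n → ℝ) (hy : ∀ i, 0 < y i)
    (hSy : ∀ i, 0 < (S *ᵥ y) i)
    (y' : Fin n → ℝ) (hy' : ∀ i, y' i = v i * y i / (S *ᵥ y) i) :
    (∑ i, v i * y i) ^ 2 / (y ⬝ᵥ (S *ᵥ y)) ≤ ∑ i, v i * y' i := by
  simpa only [hy'] using sq_sum_mul_div_dotProduct_mulVec_le S v y hy hSy

theorem wrgn_jensen_mass_bound (n : ℕ) (S : Matrix (Fin n) (Fin n) ℝ)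
    (hsym : S.IsSymm) (hnonneg : ∀ i j, 0 ≤ S i j)
    (v y : Fin n → ℝ) (hv : ∀ i, 0 < v i) (hy : ∀ i, 0 < y i)
    (hSy : ∀ i, 0 < (S *ᵥ y) i)
    (y' : Fin n → ℝ) (hy' : ∀ i, y' i = v i * y i / (S *ᵥ y) i) :
    (∑ i, v i * y i) ^ 2 / (y ⬝ᵥ (S *ᵥ y)) ≤ ∑ i, v i * y' i :=
  wrgn_jensen_mass_bound_general n S v y hy hSy y' hy'
end

section
/- With d_i = (Sz)_i and y_i = v_i z_i / d_i for z > 0 and S symmetric nonnegative with unit diagonal, the quantity Σ_i v_i y_i − y^T S y equals the sum over unordered pairs {i,j} of S_{ij} y_i y_j (v_i d_j − v_j d_i)^2 / (v_i v_j d_i d_j), and is therefore nonnegative. -/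
/-! With `r = d / v` we have `z = r * y`, so `∑ i, v i * y i = ∑ i j, S i j * y i * y j * (r j / r i)`.
Subtracting `yᵀ S y` leaves the weights `r j / r i - 1`; these vanish on the diagonal, and pairing
`(i, j)` with `(j, i)` by symmetry of `S` gives `r j / r i + r i / r j - 2 = (r i - r j) ^ 2 / (r i * r j)`. -/

open Matrix BigOperators

theorem Finset.sum_sum_eq_sum_diag_add_sum_sum_lt {ι α : Type*} [Fintype ι] [LinearOrder ι]
    [AddCommMonoid α] (g : ι → ι → α) :
    ∑ i, ∑ j, g i j = ∑ i, g i i + ∑ i, ∑ j ∈ univ.filter (i < ·), (g i j + g j i) := by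
  have hsplit : ∀ i j, g i j =
      (if i = j then g i j else 0) + ((if i < j then g i j else 0) + if j < i then g i j else 0) := by
    intro i j
    rcases lt_trichotomy i j with h | rfl | h
    · simp [h, h.ne, h.not_gt]
    · simp
    · simp [h, h.ne', h.not_gt]
  have hlower : ∑ i, ∑ j, (if j < i then g i j else 0) = ∑ i, ∑ j, if i < j then g j i else 0 :=
    Finset.sum_comm
  simp only [sum_filter, sum_add_distrib]
  conv_lhs => enter [2, i, 2, j]; rw [hsplit i j]
  simp only [sum_add_distrib, sum_ite_eq, mem_univ, if_true, hlower]

namespace Matrix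

variable {ι : Type*} [Fintype ι] [LinearOrder ι]

theorem IsSymm.sum_div_mul_mulVec_sub_dotProduct_mulVec {S : Matrix ι ι ℝ} (hS : S.IsSymm)
    {r : ι → ℝ} (hr : ∀ i, r i ≠ 0) (y : ι → ℝ) :
    ∑ i, y i / r i * (S *ᵥ (r * y)) i - y ⬝ᵥ (S *ᵥ y) =
      ∑ i, ∑ j ∈ Finset.univ.filter (i < ·),
        S i j * y i * y j * (r i - r j) ^ 2 / (r i * r j) := by
  have hexpand : ∑ i, y i / r i * (S *ᵥ (r * y)) i - y ⬝ᵥ (S *ᵥ y) =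
      ∑ i, ∑ j, S i j * y i * y j * (r j / r i - 1) := by
    simp only [mulVec, dotProduct, Pi.mul_apply, Finset.mul_sum, ← Finset.sum_sub_distrib]
    refine Finset.sum_congr rfl fun i _ => Finset.sum_congr rfl fun j _ => ?_
    field_simp [hr i]
  rw [hexpand, Finset.sum_sum_eq_sum_diag_add_sum_sum_lt]
  simp only [div_self (hr _), sub_self, mul_zero, Finset.sum_const_zero, zero_add]
  refine Finset.sum_congr rfl fun i _ => Finset.sum_congr rfl fun j _ => ?_
  rw [hS.apply i j]
  field_simp [hr i, hr j]
  ring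

end Matrix

theorem wrgn_mass_defect_identity_general (n : ℕ) (S : Matrix (Fin n) (Fin n) ℝ)
    (hsym : S.IsSymm)
    (hnonneg : ∀ i j, 0 ≤ S i j)
    (v z : Fin n → ℝ) (hv : ∀ i, 0 < v i) (hz : ∀ i, 0 < z i)
    (hd : ∀ i, 0 < (S *ᵥ z) i)
    (y : Fin n → ℝ) (hy : ∀ i, y i = v i * z i / (S *ᵥ z) i) :
    (∑ i, v i * y i) - y ⬝ᵥ (S *ᵥ y) =
      ∑ i, ∑ j ∈ Finset.univ.filter (fun j => i < j),
        S i j * y i * y j *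
          (v i * (S *ᵥ z) j - v j * (S *ᵥ z) i) ^ 2 /
            (v i * v j * (S *ᵥ z) i * (S *ᵥ z) j) ∧
    0 ≤ (∑ i, v i * y i) - y ⬝ᵥ (S *ᵥ y) := by
  set d := S *ᵥ z
  set r : Fin n → ℝ := fun i => d i / v i
  have hr : ∀ i, 0 < r i := fun i => div_pos (hd i) (hv i)
  have hy_pos : ∀ i, 0 < y i := fun i => hy i ▸ div_pos (mul_pos (hv i) (hz i)) (hd i)
  have hry : r * y = z := funext fun i => by
    simp only [Pi.mul_apply, r, hy i]
    field_simp [(hv i).ne', (hd i).ne']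
  have hmass : ∑ i, v i * y i = ∑ i, y i / r i * (S *ᵥ (r * y)) i := by
    refine Finset.sum_congr rfl fun i _ => ?_
    rw [hry, div_div_eq_mul_div, div_mul_cancel₀ _ (hd i).ne', mul_comm]
  have hidentity : (∑ i, v i * y i) - y ⬝ᵥ (S *ᵥ y) =
      ∑ i, ∑ j ∈ Finset.univ.filter (fun j => i < j),
        S i j * y i * y j * (v i * d j - v j * d i) ^ 2 / (v i * v j * d i * d j) := by
    rw [hmass, hsym.sum_div_mul_mulVec_sub_dotProduct_mulVec fun i => (hr i).ne']
    refine Finset.sum_congr rfl fun i _ => Finset.sum_congr rfl fun j _ => ?_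
    simp only [r]
    field_simp [(hv i).ne', (hv j).ne', (hd i).ne', (hd j).ne']
    ring
  refine ⟨hidentity, hidentity ▸ Finset.sum_nonneg fun i _ => Finset.sum_nonneg fun j _ => ?_⟩
  have hden := mul_pos (mul_pos (mul_pos (hv i) (hv j)) (hd i)) (hd j)
  have hcoeff := mul_nonneg (mul_nonneg (hnonneg i j) (hy_pos i).le) (hy_pos j).le
  positivity

theorem wrgn_mass_defect_identity (n : ℕ) (S : Matrix (Fin n) (Fin n) ℝ)
    (hsym : S.IsSymm) (hdiag : ∀ i, S i i = 1)
    (hnonneg : ∀ i j, 0 ≤ S i j)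
    (v z : Fin n → ℝ) (hv : ∀ i, 0 < v i) (hz : ∀ i, 0 < z i)
    (hd : ∀ i, 0 < (S *ᵥ z) i)
    (y : Fin n → ℝ) (hy : ∀ i, y i = v i * z i / (S *ᵥ z) i) :
    (∑ i, v i * y i) - y ⬝ᵥ (S *ᵥ y) =
      ∑ i, ∑ j ∈ Finset.univ.filter (fun j => i < j),
        S i j * y i * y j *
          (v i * (S *ᵥ z) j - v j * (S *ᵥ z) i) ^ 2 /
            (v i * v j * (S *ᵥ z) i * (S *ᵥ z) j) ∧
    0 ≤ (∑ i, v i * y i) - y ⬝ᵥ (S *ᵥ y) :=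
  wrgn_mass_defect_identity_general n S hsym hnonneg v z hv hz hd y hy
end
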